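/- (Monotonicity of D-LADMM.) Assume Ω* is nonempty and Assumption 1 holds. Then for any initialization (Z_0, E_0, λ_0) there exist a sequence of parameters (W_k, θ_k, β_k) ∈ S(σ_k, A) and an index K_0 such that the D-LADMM iterates ω_k = (Z_k, E_k, −λ_k) satisfy, for every k ≥ K_0, either ω_k ∈ Ω* or dist²_{H_{k+1}}(ω_{k+1}, Ω*) < dist²_{H_k}(ω_k, Ω*), where H_k is the block operator H built from (W_k, θ_k, β_k). -/

import Mathlib

open Matrix

noncomputable section

/-- Frobenius inner product `⟨M, N⟩ = trace (Mᵀ N)`. -/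
def finner {a b : ℕ} (M N : Matrix (Fin a) (Fin b) ℝ) : ℝ := (Mᵀ * N).trace

/-- Frobenius norm. -/
def fnorm {a b : ℕ} (M : Matrix (Fin a) (Fin b) ℝ) : ℝ := Real.sqrt (finner M M)

/-- Entrywise positivity of a matrix. -/
def EntrywisePos {a b : ℕ} (M : Matrix (Fin a) (Fin b) ℝ) : Prop := ∀ i j, 0 < M i j

/-- Entrywise reciprocal of a matrix. -/
def recip {a b : ℕ} (M : Matrix (Fin a) (Fin b) ℝ) : Matrix (Fin a) (Fin b) ℝ :=
  Matrix.of fun i j => (M i j)⁻¹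

/-- Convex subdifferential w.r.t. the Frobenius inner product. -/
def subdiff {a b : ℕ} (f : Matrix (Fin a) (Fin b) ℝ → ℝ) (x : Matrix (Fin a) (Fin b) ℝ) :
    Set (Matrix (Fin a) (Fin b) ℝ) :=
  {u | ∀ y, f y ≥ f x + finner u (y - x)}

/-- Spectral norm (largest singular value), via the Euclidean operator characterization. -/
def specNorm {a b : ℕ} (M : Matrix (Fin a) (Fin b) ℝ) : ℝ :=
  sSup {r | ∃ x : Fin b → ℝ, (∑ i, x i ^ 2) = 1 ∧ r = Real.sqrt (∑ i, (M.mulVec x i) ^ 2)}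

/-- Triples ω = (Z, E, Λ) (with Λ standing for −λ). -/
abbrev Triple (m d n : ℕ) :=
  Matrix (Fin d) (Fin n) ℝ × Matrix (Fin m) (Fin n) ℝ × Matrix (Fin m) (Fin n) ℝ

/-- Blockwise Frobenius inner product on triples. -/
def tinner {m d n : ℕ} (ω ω' : Triple m d n) : ℝ :=
  finner ω.1 ω'.1 + finner ω.2.1 ω'.2.1 + finner ω.2.2 ω'.2.2

/-- Blockwise Frobenius norm on triples. -/
def tfnorm {m d n : ℕ} (ω : Triple m d n) : ℝ := Real.sqrt (tinner ω ω)

/-- The linear operator `D(Z) = θ∘Z − Wᵀ(β∘(AZ))`. -/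
def Dop {m d n : ℕ} (A W : Matrix (Fin m) (Fin d) ℝ) (θ : Matrix (Fin d) (Fin n) ℝ)
    (β : Matrix (Fin m) (Fin n) ℝ) (Z : Matrix (Fin d) (Fin n) ℝ) : Matrix (Fin d) (Fin n) ℝ :=
  Matrix.hadamard θ Z - Wᵀ * Matrix.hadamard β (A * Z)

/-- The block operator `H(Z,E,Λ) = (D(Z), β∘E, β⁻¹∘Λ)`. -/
def Hop {m d n : ℕ} (A W : Matrix (Fin m) (Fin d) ℝ) (θ : Matrix (Fin d) (Fin n) ℝ)
    (β : Matrix (Fin m) (Fin n) ℝ) (ω : Triple m d n) : Triple m d n :=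
  (Dop A W θ β ω.1, Matrix.hadamard β ω.2.1, Matrix.hadamard (recip β) ω.2.2)

/-- `F(Z,E,−λ) = (Wᵀλ, λ, AZ+E−X)`. -/
def Fop {m d n : ℕ} (A : Matrix (Fin m) (Fin d) ℝ) (X : Matrix (Fin m) (Fin n) ℝ)
    (W : Matrix (Fin m) (Fin d) ℝ) (ω : Triple m d n) : Triple m d n :=
  (Wᵀ * (-ω.2.2), -ω.2.2, A * ω.1 + ω.2.1 - X)

/-- `G(E') = (Wᵀ(β∘E'), β∘E', 0)`. -/
def Gop {m d n : ℕ} (W : Matrix (Fin m) (Fin d) ℝ) (β : Matrix (Fin m) (Fin n) ℝ)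
    (E' : Matrix (Fin m) (Fin n) ℝ) : Triple m d n :=
  (Wᵀ * Matrix.hadamard β E', Matrix.hadamard β E', 0)

/-- The point `R = Z_k − θ⁻¹∘[Wᵀ(λ_k + β∘(AZ_k+E_k−X))]`. -/
def Rmat {m d n : ℕ} (A : Matrix (Fin m) (Fin d) ℝ) (X : Matrix (Fin m) (Fin n) ℝ)
    (W : Matrix (Fin m) (Fin d) ℝ) (θ : Matrix (Fin d) (Fin n) ℝ) (β : Matrix (Fin m) (Fin n) ℝ)
    (Zk : Matrix (Fin d) (Fin n) ℝ) (Ek lk : Matrix (Fin m) (Fin n) ℝ) :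
    Matrix (Fin d) (Fin n) ℝ :=
  Zk - Matrix.hadamard (recip θ) (Wᵀ * (lk + Matrix.hadamard β (A * Zk + Ek - X)))

/-- The point `S = X − AZ_{k+1} − β⁻¹∘λ_k`. -/
def Smat {m d n : ℕ} (A : Matrix (Fin m) (Fin d) ℝ) (X : Matrix (Fin m) (Fin n) ℝ)
    (β : Matrix (Fin m) (Fin n) ℝ) (Zk1 : Matrix (Fin d) (Fin n) ℝ)
    (lk : Matrix (Fin m) (Fin n) ℝ) : Matrix (Fin m) (Fin n) ℝ :=
  X - A * Zk1 - Matrix.hadamard (recip β) lk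

/-- One D-LADMM step with parameters (W, θ, β): `Z_{k+1}` minimizes
`f(Z) + (1/2)⟨θ∘(Z−R), Z−R⟩`, `E_{k+1}` minimizes `g(E) + (1/2)⟨β∘(E−S), E−S⟩`,
and `λ_{k+1} = λ_k + β∘(AZ_{k+1}+E_{k+1}−X)`. -/
def DLADMMStep {m d n : ℕ} (f : Matrix (Fin d) (Fin n) ℝ → ℝ)
    (g : Matrix (Fin m) (Fin n) ℝ → ℝ) (A : Matrix (Fin m) (Fin d) ℝ)
    (X : Matrix (Fin m) (Fin n) ℝ) (W : Matrix (Fin m) (Fin d) ℝ)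
    (θ : Matrix (Fin d) (Fin n) ℝ) (β : Matrix (Fin m) (Fin n) ℝ)
    (Zk : Matrix (Fin d) (Fin n) ℝ) (Ek lk : Matrix (Fin m) (Fin n) ℝ)
    (Zk1 : Matrix (Fin d) (Fin n) ℝ) (Ek1 lk1 : Matrix (Fin m) (Fin n) ℝ) : Prop :=
  (∀ Z, f Zk1 + (1/2) * finner (Matrix.hadamard θ (Zk1 - Rmat A X W θ β Zk Ek lk))
        (Zk1 - Rmat A X W θ β Zk Ek lk)
      ≤ f Z + (1/2) * finner (Matrix.hadamard θ (Z - Rmat A X W θ β Zk Ek lk))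
        (Z - Rmat A X W θ β Zk Ek lk)) ∧
  (∀ E, g Ek1 + (1/2) * finner (Matrix.hadamard β (Ek1 - Smat A X β Zk1 lk))
        (Ek1 - Smat A X β Zk1 lk)
      ≤ g E + (1/2) * finner (Matrix.hadamard β (E - Smat A X β Zk1 lk))
        (E - Smat A X β Zk1 lk)) ∧
  lk1 = lk + Matrix.hadamard β (A * Zk1 + Ek1 - X)

/-- The KKT / solution set Ω* (stored as triples ω = (Z, E, −λ)). -/
def OmegaStar {m d n : ℕ} (f : Matrix (Fin d) (Fin n) ℝ → ℝ)
    (g : Matrix (Fin m) (Fin n) ℝ → ℝ) (A : Matrix (Fin m) (Fin d) ℝ)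
    (X : Matrix (Fin m) (Fin n) ℝ) : Set (Triple m d n) :=
  {ω | Aᵀ * ω.2.2 ∈ subdiff f ω.1 ∧ ω.2.2 ∈ subdiff g ω.2.1 ∧ A * ω.1 + ω.2.1 = X}

/-- The parameter set `S(σ, A)`. -/
def Sset {m d n : ℕ} (σ : ℝ) (A : Matrix (Fin m) (Fin d) ℝ) :
    Set (Matrix (Fin m) (Fin d) ℝ × Matrix (Fin d) (Fin n) ℝ × Matrix (Fin m) (Fin n) ℝ) :=
  {p | specNorm (p.1 - A) ≤ σ ∧ EntrywisePos p.2.1 ∧ EntrywisePos p.2.2 ∧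
    ∀ Z : Matrix (Fin d) (Fin n) ℝ, Z ≠ 0 → 0 < finner (Dop A p.1 p.2.1 p.2.2 Z) Z}

/-- `dist²_H(ω, S)` where `H` is built from `(W, θ, β)`. -/
def dist2H {m d n : ℕ} (A W : Matrix (Fin m) (Fin d) ℝ) (θ : Matrix (Fin d) (Fin n) ℝ)
    (β : Matrix (Fin m) (Fin n) ℝ) (ω : Triple m d n) (S : Set (Triple m d n)) : ℝ :=
  sInf {r | ∃ ωs ∈ S, r = tinner (ω - ωs) (Hop A W θ β (ω - ωs))}

/-- Frobenius distance of a triple to a set of triples. -/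
def distF {m d n : ℕ} (ω : Triple m d n) (S : Set (Triple m d n)) : ℝ :=
  sInf {r | ∃ ωs ∈ S, r = tfnorm (ω - ωs)}



lemma finner_eq_sum {a b : ℕ} (M N : Matrix (Fin a) (Fin b) ℝ) :
    finner M N = ∑ i, ∑ j, M i j * N i j := by
  rw [finner, Matrix.trace]
  simp only [Matrix.diag, Matrix.mul_apply, Matrix.transpose_apply]
  exact Finset.sum_comm

lemma finner_comm {a b : ℕ} (M N : Matrix (Fin a) (Fin b) ℝ) : finner M N = finner N M := by
  simp [finner_eq_sum, mul_comm]

lemma finner_add_left {a b : ℕ} (M P N : Matrix (Fin a) (Fin b) ℝ) :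
    finner (M + P) N = finner M N + finner P N := by
  simp [finner_eq_sum, add_mul, Finset.sum_add_distrib]

lemma finner_sub_left {a b : ℕ} (M P N : Matrix (Fin a) (Fin b) ℝ) :
    finner (M - P) N = finner M N - finner P N := by
  simp [finner_eq_sum, sub_mul, Finset.sum_sub_distrib]

lemma finner_add_right {a b : ℕ} (M P N : Matrix (Fin a) (Fin b) ℝ) :
    finner M (P + N) = finner M P + finner M N := by
  simp [finner_eq_sum, mul_add, Finset.sum_add_distrib]

lemma finner_sub_right {a b : ℕ} (M P N : Matrix (Fin a) (Fin b) ℝ) :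
    finner M (P - N) = finner M P - finner M N := by
  simp [finner_eq_sum, mul_sub, Finset.sum_sub_distrib]

lemma finner_smul_left {a b : ℕ} (t : ℝ) (M N : Matrix (Fin a) (Fin b) ℝ) :
    finner (t • M) N = t * finner M N := by
  simp [finner_eq_sum, Finset.mul_sum, mul_assoc]

lemma finner_smul_right {a b : ℕ} (t : ℝ) (M N : Matrix (Fin a) (Fin b) ℝ) :
    finner M (t • N) = t * finner M N := by
  simp [finner_eq_sum, Finset.mul_sum]; ring_nf
  exact Finset.sum_congr rfl fun i _ => Finset.sum_congr rfl fun j _ => by ring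

lemma finner_neg_left {a b : ℕ} (M N : Matrix (Fin a) (Fin b) ℝ) :
    finner (-M) N = - finner M N := by
  simp [finner_eq_sum]

lemma finner_neg_right {a b : ℕ} (M N : Matrix (Fin a) (Fin b) ℝ) :
    finner M (-N) = - finner M N := by
  simp [finner_eq_sum]

lemma finner_self_nonneg {a b : ℕ} (M : Matrix (Fin a) (Fin b) ℝ) : 0 ≤ finner M M := by
  rw [finner_eq_sum]
  exact Finset.sum_nonneg fun i _ => Finset.sum_nonneg fun j _ => mul_self_nonneg _

lemma finner_self_pos {a b : ℕ} {M : Matrix (Fin a) (Fin b) ℝ} (h : M ≠ 0) :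
    0 < finner M M := by
  rcases lt_or_eq_of_le (finner_self_nonneg M) with h' | h'
  · exact h'
  · exfalso; apply h
    rw [finner_eq_sum] at h'
    ext i j
    have h1 : ∀ i ∈ Finset.univ, (0:ℝ) ≤ ∑ j, M i j * M i j :=
      fun i _ => Finset.sum_nonneg fun j _ => mul_self_nonneg _
    have h2 := (Finset.sum_eq_zero_iff_of_nonneg h1).mp h'.symm i (Finset.mem_univ i)
    have h3 := (Finset.sum_eq_zero_iff_of_nonneg
      (fun j _ => mul_self_nonneg (M i j))).mp h2 j (Finset.mem_univ j)
    simpa [mul_self_eq_zero] using h3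

lemma finner_adj {m d n : ℕ} (A : Matrix (Fin m) (Fin d) ℝ) (M : Matrix (Fin d) (Fin n) ℝ)
    (N : Matrix (Fin m) (Fin n) ℝ) : finner (A * M) N = finner M (Aᵀ * N) := by
  rw [finner, finner, Matrix.transpose_mul, Matrix.mul_assoc]

lemma finner_opbound {m d n : ℕ} (A : Matrix (Fin m) (Fin d) ℝ) (M : Matrix (Fin d) (Fin n) ℝ) :
    finner (A * M) (A * M) ≤ (∑ i, ∑ k, (A i k)^2) * finner M M := by
  rw [finner_eq_sum, finner_eq_sum]
  have step : ∀ i j, (A * M) i j * (A * M) i j ≤ (∑ k, (A i k)^2) * (∑ k, (M k j)^2) := by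
    intro i j
    rw [Matrix.mul_apply, ← sq]
    exact Finset.sum_mul_sq_le_sq_mul_sq _ _ _
  calc ∑ i, ∑ j, (A * M) i j * (A * M) i j
      ≤ ∑ i, ∑ j, (∑ k, (A i k)^2) * (∑ k, (M k j)^2) := by
        exact Finset.sum_le_sum fun i _ => Finset.sum_le_sum fun j _ => step i j
    _ = (∑ i, ∑ k, (A i k)^2) * (∑ j, ∑ k, (M k j)^2) := by
        simp only [← Finset.mul_sum]
        rw [← Finset.sum_mul]
    _ = (∑ i, ∑ k, (A i k)^2) * ∑ k, ∑ j, M k j * M k j := by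
        rw [Finset.sum_comm (γ := Fin n)]
        simp [sq]

lemma subdiff_mono {a b : ℕ} {f : Matrix (Fin a) (Fin b) ℝ → ℝ} {x y u v : Matrix (Fin a) (Fin b) ℝ}
    (hu : u ∈ subdiff f x) (hv : v ∈ subdiff f y) : 0 ≤ finner (u - v) (x - y) := by
  have h1 := hu y
  have h2 := hv x
  have h3 : finner u (y - x) = - finner u (x - y) := by
    rw [← finner_neg_right]; congr 1; abel
  rw [finner_sub_left]
  linarith [h1, h2, h3]

/-- Extraction of the subgradient optimality condition from the prox-minimality. -/
lemma prox_subgrad {a b : ℕ} {f : Matrix (Fin a) (Fin b) ℝ → ℝ}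
    (hf : ConvexOn ℝ Set.univ f) {t : ℝ} (ht : 0 < t) {R Z1 : Matrix (Fin a) (Fin b) ℝ}
    (hmin : ∀ Z, f Z1 + t / 2 * finner (Z1 - R) (Z1 - R) ≤ f Z + t / 2 * finner (Z - R) (Z - R)) :
    t • (R - Z1) ∈ subdiff f Z1 := by
  intro Y
  set V := Y - Z1 with hV
  set P := Z1 - R with hP
  have key : ∀ s : ℝ, 0 < s → s ≤ 1 →
      0 ≤ f Y - f Z1 + t * finner P V + t / 2 * s * finner V V := by
    intro s hs hs1
    have hconv := hf.2 (Set.mem_univ Z1) (Set.mem_univ Y) (by linarith : (0:ℝ) ≤ 1 - s)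
      (le_of_lt hs) (by ring)
    have hzeq : (1 - s) • Z1 + s • Y = Z1 + s • V := by
      rw [hV]; module
    rw [hzeq] at hconv
    have hm := hmin (Z1 + s • V)
    have hq : finner (Z1 + s • V - R) (Z1 + s • V - R)
        = finner P P + 2 * s * finner P V + s ^ 2 * finner V V := by
      have : Z1 + s • V - R = P + s • V := by rw [hP]; abel
      rw [this, finner_add_left, finner_add_right, finner_add_right, finner_smul_left,
        finner_smul_right, finner_smul_left, finner_smul_right, finner_comm V P]
      ring
    rw [hq] at hm
    have hfs : f (Z1 + s • V) ≤ f Z1 + s * (f Y - f Z1) := by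
      have h' : (1 - s) • f Z1 + s • f Y = f Z1 + s * (f Y - f Z1) := by
        simp [smul_eq_mul]; ring
      linarith [hconv, h'.le, h'.ge]
    have h0 : 0 ≤ s * (f Y - f Z1 + t * finner P V + t / 2 * s * finner V V) := by
      nlinarith [hm, hfs]
    rcases le_or_gt 0 (f Y - f Z1 + t * finner P V + t / 2 * s * finner V V) with h | h
    · exact h
    · exfalso; nlinarith [h0, hs, h]
  have main : 0 ≤ f Y - f Z1 + t * finner P V := by
    by_contra hneg
    push_neg at hneg
    set a0 : ℝ := f Y - f Z1 + t * finner P V with ha0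
    have hQ : 0 ≤ finner V V := finner_self_nonneg V
    have hc : 0 < 2 * (t / 2 * finner V V + 1) := by nlinarith
    set s : ℝ := min 1 ((-a0) / (2 * (t / 2 * finner V V + 1))) with hsdef
    have hs0 : 0 < s := lt_min one_pos (div_pos (by linarith) hc)
    have hs1 : s ≤ 1 := min_le_left _ _
    have hk := key s hs0 hs1
    have hsb : s ≤ (-a0) / (2 * (t / 2 * finner V V + 1)) := min_le_right _ _
    have hsb' : s * (2 * (t / 2 * finner V V + 1)) ≤ -a0 := by
      rw [← le_div_iff₀ hc]; exact hsb
    nlinarith [hk, hs0, hQ]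
  have hfin : finner (t • (R - Z1)) V = - (t * finner P V) := by
    rw [finner_smul_left]
    have hRP : R - Z1 = -P := by rw [hP]; abel
    rw [hRP, finner_neg_left]
    ring
  rw [ge_iff_le, hfin]
  linarith

open scoped RealInnerProductSpace in
/-- Existence of a minimizer for a convex function with a linear lower bound plus a
strongly convex quadratic. -/
lemma exists_min_euc {ι : Type} [Fintype ι] {F : EuclideanSpace ℝ ι → ℝ}
    (hF : ConvexOn ℝ Set.univ F) {u : EuclideanSpace ℝ ι} {c : ℝ}
    (hlb : ∀ y, c + ⟪u, y⟫ ≤ F y) {t : ℝ} (ht : 0 < t) (r : EuclideanSpace ℝ ι) :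
    ∃ x, ∀ y, F x + t / 2 * ‖x - r‖ ^ 2 ≤ F y + t / 2 * ‖y - r‖ ^ 2 := by
  have hFc : Continuous F := hF.locallyLipschitz.continuous
  set G : EuclideanSpace ℝ ι → ℝ := fun y => F y + t / 2 * ‖y - r‖ ^ 2 with hG
  have hGc : Continuous G := by
    apply hFc.add
    exact continuous_const.mul ((continuous_id.sub continuous_const).norm.pow 2)
  set ρ : ℝ := max ((2 / t) * (‖u‖ + 1)) (G r - (c + ⟪u, r⟫)) with hρ
  have hbd : ∀ x, ρ ≤ ‖x - r‖ → G r ≤ G x := by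
    intro x hx
    have h1 : c + ⟪u, x⟫ ≤ F x := hlb x
    have h2 : ⟪u, x⟫ = ⟪u, r⟫ + ⟪u, x - r⟫ := by
      rw [← inner_add_right]; congr 1; abel
    have h3 : -(‖u‖ * ‖x - r‖) ≤ ⟪u, x - r⟫ := by
      have := abs_real_inner_le_norm u (x - r)
      have := abs_le.mp this
      linarith [this.1]
    have hs0 : (2 / t) * (‖u‖ + 1) ≤ ‖x - r‖ := le_trans (le_max_left _ _) hx
    have hs1 : G r - (c + ⟪u, r⟫) ≤ ‖x - r‖ := le_trans (le_max_right _ _) hx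
    have hsnn : 0 ≤ ‖x - r‖ := norm_nonneg _
    have hu1 : ‖u‖ + 1 ≤ t / 2 * ‖x - r‖ := by
      rw [div_mul_eq_mul_div, le_div_iff₀ (by norm_num : (0:ℝ) < 2)]
      calc (‖u‖ + 1) * 2 = t * ((2 / t) * (‖u‖ + 1)) := by field_simp
        _ ≤ t * ‖x - r‖ := by nlinarith
    have key : t / 2 * ‖x - r‖ ^ 2 - ‖u‖ * ‖x - r‖ ≥ ‖x - r‖ := by nlinarith
    rw [h2] at h1
    have hGx : G x = F x + t / 2 * ‖x - r‖ ^ 2 := rfl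
    calc G r ≤ c + ⟪u, r⟫ + ‖x - r‖ := by linarith [hs1]
      _ ≤ c + ⟪u, r⟫ + (t / 2 * ‖x - r‖ ^ 2 - ‖u‖ * ‖x - r‖) := by linarith [key]
      _ ≤ c + (⟪u, r⟫ + ⟪u, x - r⟫) + t / 2 * ‖x - r‖ ^ 2 := by linarith [h3]
      _ ≤ F x + t / 2 * ‖x - r‖ ^ 2 := by linarith [h1]
      _ = G x := hGx.symm
  have hev : ∀ᶠ x in Filter.cocompact (EuclideanSpace ℝ ι), G r ≤ G x := by
    rw [Filter.eventually_iff, Filter.mem_cocompact']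
    refine ⟨Metric.closedBall r ρ, isCompact_closedBall r ρ, ?_⟩
    intro x hx
    simp only [Set.mem_compl_iff, Set.mem_setOf_eq, not_le] at hx
    rw [Metric.mem_closedBall]
    by_contra hball
    push_neg at hball
    have h' : ρ ≤ ‖x - r‖ := by rw [← dist_eq_norm]; exact hball.le
    exact absurd (hbd x h') (not_le.mpr hx)
  obtain ⟨x, hx⟩ := hGc.exists_forall_le' r hev
  exact ⟨x, hx⟩

def toE {a b : ℕ} (M : Matrix (Fin a) (Fin b) ℝ) : EuclideanSpace ℝ (Fin a × Fin b) :=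
  WithLp.toLp 2 (fun p => M p.1 p.2)

def fromE {a b : ℕ} (x : EuclideanSpace ℝ (Fin a × Fin b)) : Matrix (Fin a) (Fin b) ℝ :=
  Matrix.of fun i j => x (i, j)

open scoped RealInnerProductSpace in
lemma toE_inner {a b : ℕ} (M N : Matrix (Fin a) (Fin b) ℝ) :
    ⟪toE M, toE N⟫ = finner M N := by
  rw [finner_eq_sum]
  simp only [PiLp.inner_apply, RCLike.inner_apply, starRingEnd_apply, star_trivial]
  rw [Fintype.sum_prod_type]
  exact Finset.sum_congr rfl fun i _ => Finset.sum_congr rfl fun j _ => mul_comm _ _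

lemma toE_norm_sq {a b : ℕ} (M : Matrix (Fin a) (Fin b) ℝ) :
    ‖toE M‖ ^ 2 = finner M M := by
  rw [← toE_inner]
  exact (real_inner_self_eq_norm_sq (toE M)).symm

lemma toE_sub {a b : ℕ} (M N : Matrix (Fin a) (Fin b) ℝ) :
    toE (M - N) = toE M - toE N := rfl

/-- Existence of the prox step for a convex function with a subgradient somewhere. -/
lemma exists_prox {a b : ℕ} {f : Matrix (Fin a) (Fin b) ℝ → ℝ}
    (hf : ConvexOn ℝ Set.univ f) {u Z0 : Matrix (Fin a) (Fin b) ℝ}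
    (hlb : ∀ Y, f Y ≥ f Z0 + finner u (Y - Z0)) {t : ℝ} (ht : 0 < t)
    (R : Matrix (Fin a) (Fin b) ℝ) :
    ∃ Z1, ∀ Z, f Z1 + t / 2 * finner (Z1 - R) (Z1 - R) ≤ f Z + t / 2 * finner (Z - R) (Z - R) := by
  set F : EuclideanSpace ℝ (Fin a × Fin b) → ℝ := fun y => f (fromE y) with hF
  have hFconv : ConvexOn ℝ Set.univ F := by
    refine ⟨convex_univ, ?_⟩
    intro x _ y _ s1 s2 hs1 hs2 hsum
    have : fromE (s1 • x + s2 • y) = s1 • fromE x + s2 • fromE y := rfl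
    show f (fromE (s1 • x + s2 • y)) ≤ _
    rw [this]
    exact hf.2 (Set.mem_univ _) (Set.mem_univ _) hs1 hs2 hsum
  have hFlb : ∀ y, (f Z0 - finner u Z0) + (inner ℝ (toE u) y : ℝ) ≤ F y := by
    intro y
    have h1 := hlb (fromE y)
    have h2 : finner u (fromE y - Z0) = finner u (fromE y) - finner u Z0 := finner_sub_right _ _ _
    have h3 : (inner ℝ (toE u) y : ℝ) = finner u (fromE y) := toE_inner u (fromE y)
    rw [h3]
    linarith [h1, h2.le, h2.ge]
  obtain ⟨x, hx⟩ := exists_min_euc hFconv hFlb ht (toE R)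
  refine ⟨fromE x, fun Z => ?_⟩
  have h1 := hx (toE Z)
  have h2 : ‖x - toE R‖ ^ 2 = finner (fromE x - R) (fromE x - R) := by
    have hE : toE (fromE x - R) = x - toE R := rfl
    rw [← hE, toE_norm_sq]
  have h3 : ‖toE Z - toE R‖ ^ 2 = finner (Z - R) (Z - R) := by
    rw [← toE_sub, toE_norm_sq]
  have h4 : F (toE Z) = f Z := rfl
  have h5 : F x = f (fromE x) := rfl
  rw [h2, h3, h4, h5] at h1
  exact h1

lemma finner_adj' {m d n : ℕ} (A : Matrix (Fin m) (Fin d) ℝ) (M : Matrix (Fin m) (Fin n) ℝ)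
    (N : Matrix (Fin d) (Fin n) ℝ) : finner (Aᵀ * M) N = finner M (A * N) := by
  rw [finner, finner, Matrix.transpose_mul, Matrix.transpose_transpose, Matrix.mul_assoc]

lemma quad_identity {m d n : ℕ} (A : Matrix (Fin m) (Fin d) ℝ) (t : ℝ)
    (Z1 Z2 Zst : Matrix (Fin d) (Fin n) ℝ) (E1 E2 Est L1 L2 Lst X : Matrix (Fin m) (Fin n) ℝ)
    (h3 : A * Zst + Est = X)
    (h7 : A * Z2 + E2 - X = L1 - L2) :
    (t * finner (Z1 - Zst) (Z1 - Zst) - finner (A * (Z1 - Zst)) (A * (Z1 - Zst))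
      + finner (E1 - Est) (E1 - Est) + finner (L1 - Lst) (L1 - Lst))
    - (t * finner (Z2 - Zst) (Z2 - Zst) - finner (A * (Z2 - Zst)) (A * (Z2 - Zst))
      + finner (E2 - Est) (E2 - Est) + finner (L2 - Lst) (L2 - Lst))
    - (t * finner (Z1 - Z2) (Z1 - Z2) - finner (A * (Z1 - Z2)) (A * (Z1 - Z2))
      + finner (E1 - E2) (E1 - E2) + finner (L1 - L2) (L1 - L2))
    = 2 * (finner (t • (Z1 - Z2) - Aᵀ * (A * (Z1 - Z2)) - Aᵀ * (E1 - E2) + Aᵀ * L2 - Aᵀ * Lst)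
        (Z2 - Zst)
      + finner (L2 - Lst) (E2 - Est) + finner (L1 - L2) (E1 - E2)) := by
  have hZst : A * Zst = X - Est := by rw [← h3]; abel
  have hZ2 : A * Z2 = X - E2 + (L1 - L2) := by rw [← h7]; abel
  simp only [Matrix.mul_sub, Matrix.mul_add, hZst, hZ2, finner_add_left, finner_add_right,
    finner_sub_left, finner_sub_right, finner_smul_left, finner_smul_right, finner_adj']
  ring_nf
  simp only [finner_comm]
  ring

lemma finner_zero_left {a b : ℕ} (N : Matrix (Fin a) (Fin b) ℝ) : finner 0 N = 0 := by
  simp [finner_eq_sum]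

/-- Theorem 2 of the paper: monotonicity of D-LADMM. Under Assumption 1
and nonemptiness of Ω*, for any initialization there exist parameters
`(W_k, θ_k, β_k) ∈ S(σ_k, A)` and an index `K₀` such that for every `k ≥ K₀` either
the iterate is already a solution or `dist²_{H_{k+1}}(ω_{k+1}, Ω*) < dist²_{H_k}(ω_k, Ω*)`. -/
theorem dladmm_monotonicity {m d n : ℕ} [NeZero m] [NeZero d] [NeZero n]
    (f : Matrix (Fin d) (Fin n) ℝ → ℝ) (g : Matrix (Fin m) (Fin n) ℝ → ℝ)
    (hf : ConvexOn ℝ Set.univ f) (hg : ConvexOn ℝ Set.univ g)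
    (A : Matrix (Fin m) (Fin d) ℝ) (X : Matrix (Fin m) (Fin n) ℝ)
    (hne : (OmegaStar f g A X).Nonempty)
    (hassum : ∃ c : ℝ, 0 < c ∧ ∀ σ : ℝ, 0 ≤ σ → σ ≤ c → (Sset (n := n) σ A).Nonempty) :
    ∀ (Z0 : Matrix (Fin d) (Fin n) ℝ) (E0 l0 : Matrix (Fin m) (Fin n) ℝ),
      ∃ (W : ℕ → Matrix (Fin m) (Fin d) ℝ) (θ : ℕ → Matrix (Fin d) (Fin n) ℝ)
        (β : ℕ → Matrix (Fin m) (Fin n) ℝ) (σ : ℕ → ℝ),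
        (∀ k, (W k, θ k, β k) ∈ Sset (σ k) A) ∧
        ∃ (Zs : ℕ → Matrix (Fin d) (Fin n) ℝ) (Es ls : ℕ → Matrix (Fin m) (Fin n) ℝ),
          Zs 0 = Z0 ∧ Es 0 = E0 ∧ ls 0 = l0 ∧
          (∀ k, DLADMMStep f g A X (W k) (θ k) (β k)
            (Zs k) (Es k) (ls k) (Zs (k+1)) (Es (k+1)) (ls (k+1))) ∧
          ∃ K0 : ℕ, ∀ k ≥ K0,
            (Zs k, Es k, -ls k) ∈ OmegaStar f g A X ∨
            dist2H A (W (k+1)) (θ (k+1)) (β (k+1)) (Zs (k+1), Es (k+1), -ls (k+1))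
                (OmegaStar f g A X)
              < dist2H A (W k) (θ k) (β k) (Zs k, Es k, -ls k) (OmegaStar f g A X) := by

  intro Z0 E0 l0
  classical
  -- the fixed parameter choice
  set t : ℝ := 1 + ∑ i, ∑ k, (A i k) ^ 2 with htdef
  have htA : 0 ≤ ∑ i, ∑ k, (A i k) ^ 2 :=
    Finset.sum_nonneg fun i _ => Finset.sum_nonneg fun k _ => sq_nonneg _
  have ht : 0 < t := by rw [htdef]; linarith
  set θJ : Matrix (Fin d) (Fin n) ℝ := Matrix.of fun _ _ => t with hθdef
  set J : Matrix (Fin m) (Fin n) ℝ := Matrix.of fun _ _ => (1 : ℝ) with hJdef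
  have hadT : ∀ M : Matrix (Fin d) (Fin n) ℝ, Matrix.hadamard θJ M = t • M := by
    intro M; ext i j; simp [Matrix.hadamard_apply, hθdef]
  have hadJ : ∀ M : Matrix (Fin m) (Fin n) ℝ, Matrix.hadamard J M = M := by
    intro M; ext i j; simp [Matrix.hadamard_apply, hJdef]
  have hrecipθ : ∀ M : Matrix (Fin d) (Fin n) ℝ, Matrix.hadamard (recip θJ) M = t⁻¹ • M := by
    intro M; ext i j; simp [Matrix.hadamard_apply, recip, hθdef]
  have hrecipJ : recip J = J := by ext i j; simp [recip, hJdef]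
  have hDpos : ∀ Z : Matrix (Fin d) (Fin n) ℝ, Z ≠ 0 →
      0 < t * finner Z Z - finner (A * Z) (A * Z) := by
    intro Z hZ
    have h1 := finner_opbound A Z
    have h2 := finner_self_pos hZ
    rw [htdef]
    nlinarith
  -- the quadratic form
  set Qv : Triple m d n → ℝ := fun δ =>
    t * finner δ.1 δ.1 - finner (A * δ.1) (A * δ.1)
      + finner δ.2.1 δ.2.1 + finner δ.2.2 δ.2.2 with hQv
  have hQ : ∀ δ : Triple m d n, tinner δ (Hop A A θJ J δ) = Qv δ := by
    intro δ
    simp only [hQv]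
    simp only [tinner, Hop, Dop, hadT, hadJ, hrecipJ]
    rw [finner_sub_right, finner_smul_right, ← finner_adj]
  have hQnn : ∀ δ : Triple m d n, 0 ≤ Qv δ := by
    intro δ
    simp only [hQv]
    have h1 := finner_self_nonneg δ.2.1
    have h2 := finner_self_nonneg δ.2.2
    rcases eq_or_ne δ.1 0 with h | h
    · rw [h, Matrix.mul_zero]
      simp only [finner_zero_left]
      linarith
    · have := hDpos δ.1 h
      linarith
  have hQpos : ∀ δ : Triple m d n, δ ≠ 0 → 0 < Qv δ := by
    intro δ hδ
    simp only [hQv]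
    have h1 := finner_self_nonneg δ.2.1
    have h2 := finner_self_nonneg δ.2.2
    rcases eq_or_ne δ.1 0 with h | h
    · rw [h, Matrix.mul_zero]
      simp only [finner_zero_left]
      rcases eq_or_ne δ.2.1 0 with h2' | h2'
      · have h3 : δ.2.2 ≠ 0 := by
          intro h3
          apply hδ
          have : δ = (δ.1, δ.2.1, δ.2.2) := rfl
          rw [this, h, h2', h3]
          rfl
        have := finner_self_pos h3
        linarith
      · have := finner_self_pos h2'
        linarith
    · have := hDpos δ.1 h
      linarith
  -- a solution point, giving linear lower bounds for f and g
  obtain ⟨ωst, hωstmem⟩ := hne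
  obtain ⟨hfs, hgs, hcs⟩ := hωstmem
  -- coefficient normalizations
  have eθ : ∀ M : Matrix (Fin d) (Fin n) ℝ,
      (1 / 2 : ℝ) * finner (Matrix.hadamard θJ M) M = t / 2 * finner M M := by
    intro M; rw [hadT, finner_smul_left]; ring
  have eJ : ∀ M : Matrix (Fin m) (Fin n) ℝ,
      (1 / 2 : ℝ) * finner (Matrix.hadamard J M) M = 1 / 2 * finner M M := by
    intro M; rw [hadJ]
  -- existence of one D-LADMM step from any state
  have hstep : ∀ q : Matrix (Fin d) (Fin n) ℝ × Matrix (Fin m) (Fin n) ℝ × Matrix (Fin m) (Fin n) ℝ,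
      ∃ q' : Matrix (Fin d) (Fin n) ℝ × Matrix (Fin m) (Fin n) ℝ × Matrix (Fin m) (Fin n) ℝ,
        DLADMMStep f g A X A θJ J q.1 q.2.1 q.2.2 q'.1 q'.2.1 q'.2.2 := by
    intro q
    obtain ⟨Z1, hZ1⟩ := exists_prox hf hfs ht (Rmat A X A θJ J q.1 q.2.1 q.2.2)
    obtain ⟨E1, hE1⟩ := exists_prox hg hgs one_pos (Smat A X J Z1 q.2.2)
    refine ⟨(Z1, E1, q.2.2 + Matrix.hadamard J (A * Z1 + E1 - X)), ?_, ?_, rfl⟩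
    · intro Z
      rw [eθ, eθ]
      exact hZ1 Z
    · intro E
      rw [eJ, eJ]
      exact hE1 E
  choose next hnext using hstep
  set p : ℕ → Matrix (Fin d) (Fin n) ℝ × Matrix (Fin m) (Fin n) ℝ × Matrix (Fin m) (Fin n) ℝ :=
    fun k => Nat.rec (Z0, E0, l0) (fun _ q => next q) k with hp
  have hDstep : ∀ k, DLADMMStep f g A X A θJ J (p k).1 (p k).2.1 (p k).2.2
      (p (k + 1)).1 (p (k + 1)).2.1 (p (k + 1)).2.2 := fun k => hnext (p k)
  -- recurrence for the multiplier
  have hlrec : ∀ k, (p (k + 1)).2.2 = (p k).2.2 + (A * (p (k + 1)).1 + (p (k + 1)).2.1 - X) := by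
    intro k
    have h := (hDstep k).2.2
    rwa [hadJ] at h
  -- the multiplier is a subgradient of g at the E-iterate
  have hsubE : ∀ k, -(p (k + 1)).2.2 ∈ subdiff g (p (k + 1)).2.1 := by
    intro k
    have h := (hDstep k).2.1
    have h' : ∀ E, g (p (k + 1)).2.1 + 1 / 2 *
        finner ((p (k + 1)).2.1 - Smat A X J (p (k + 1)).1 (p k).2.2)
          ((p (k + 1)).2.1 - Smat A X J (p (k + 1)).1 (p k).2.2)
        ≤ g E + 1 / 2 * finner (E - Smat A X J (p (k + 1)).1 (p k).2.2)
          (E - Smat A X J (p (k + 1)).1 (p k).2.2) := by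
      intro E
      have h2 := h E
      rwa [eJ, eJ] at h2
    have hsg := prox_subgrad hg one_pos h'
    have hEq : (1 : ℝ) • (Smat A X J (p (k + 1)).1 (p k).2.2 - (p (k + 1)).2.1)
        = -(p (k + 1)).2.2 := by
      rw [one_smul, hlrec k, Smat, hrecipJ, hadJ]
      abel
    rwa [hEq] at hsg
  -- the Z-optimality condition
  have hsubZ : ∀ k, (t • ((p k).1 - (p (k + 1)).1) - Aᵀ * (A * ((p k).1 - (p (k + 1)).1))
      - Aᵀ * ((p k).2.1 - (p (k + 1)).2.1) + Aᵀ * (-(p (k + 1)).2.2))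
      ∈ subdiff f (p (k + 1)).1 := by
    intro k
    have h := (hDstep k).1
    have h' : ∀ Z, f (p (k + 1)).1 + t / 2 *
        finner ((p (k + 1)).1 - Rmat A X A θJ J (p k).1 (p k).2.1 (p k).2.2)
          ((p (k + 1)).1 - Rmat A X A θJ J (p k).1 (p k).2.1 (p k).2.2)
        ≤ f Z + t / 2 * finner (Z - Rmat A X A θJ J (p k).1 (p k).2.1 (p k).2.2)
          (Z - Rmat A X A θJ J (p k).1 (p k).2.1 (p k).2.2) := by
      intro Z
      have h2 := h Z
      rwa [eθ, eθ] at h2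
    have hsg := prox_subgrad hf ht h'
    have hM : (p k).2.2 + Matrix.hadamard J (A * (p k).1 + (p k).2.1 - X)
        = (p (k + 1)).2.2 + A * ((p k).1 - (p (k + 1)).1) + ((p k).2.1 - (p (k + 1)).2.1) := by
      rw [hadJ, hlrec k, Matrix.mul_sub]
      abel
    have hEq : t • (Rmat A X A θJ J (p k).1 (p k).2.1 (p k).2.2 - (p (k + 1)).1)
        = t • ((p k).1 - (p (k + 1)).1) - Aᵀ * (A * ((p k).1 - (p (k + 1)).1))
          - Aᵀ * ((p k).2.1 - (p (k + 1)).2.1) + Aᵀ * (-(p (k + 1)).2.2) := by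
      rw [Rmat, hrecipθ, hM]
      rw [sub_right_comm, smul_sub, smul_smul, mul_inv_cancel₀ (ne_of_gt ht), one_smul]
      rw [Matrix.mul_add, Matrix.mul_add, Matrix.mul_neg]
      rw [smul_sub]
      abel
    rwa [hEq] at hsg
  -- the key decrease inequality
  have key : ∀ j, ∀ ωs ∈ OmegaStar f g A X,
      Qv (((p (j + 1 + 1)).1, (p (j + 1 + 1)).2.1, -(p (j + 1 + 1)).2.2) - ωs)
        + Qv (((p (j + 1)).1, (p (j + 1)).2.1, -(p (j + 1)).2.2)
            - ((p (j + 1 + 1)).1, (p (j + 1 + 1)).2.1, -(p (j + 1 + 1)).2.2))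
      ≤ Qv (((p (j + 1)).1, (p (j + 1)).2.1, -(p (j + 1)).2.2) - ωs) := by
    intro j ωs hωs
    obtain ⟨hfs', hgs', hcs'⟩ := hωs
    have m1 := subdiff_mono (hsubZ (j + 1)) hfs'
    have m2 := subdiff_mono (hsubE (j + 1)) hgs'
    have m3 := subdiff_mono (hsubE j) (hsubE (j + 1))
    have h7x : A * (p (j + 1 + 1)).1 + (p (j + 1 + 1)).2.1 - X
        = (-(p (j + 1)).2.2) - (-(p (j + 1 + 1)).2.2) := by
      rw [hlrec (j + 1)]
      abel
    have hid := quad_identity A t (p (j + 1)).1 (p (j + 1 + 1)).1 ωs.1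
      (p (j + 1)).2.1 (p (j + 1 + 1)).2.1 ωs.2.1
      (-(p (j + 1)).2.2) (-(p (j + 1 + 1)).2.2) ωs.2.2 X hcs' h7x
    simp only [hQv, Prod.fst_sub, Prod.snd_sub]
    linarith [hid, m1, m2, m3]
  -- assemble everything
  refine ⟨fun _ => A, fun _ => θJ, fun _ => J, fun _ => 1, ?_, fun k => (p k).1,
    fun k => (p k).2.1, fun k => (p k).2.2, rfl, rfl, rfl, fun k => hDstep k, 1, ?_⟩
  · -- parameter set membership
    intro k
    refine ⟨?_, ?_, ?_, ?_⟩
    · show specNorm (A - A) ≤ 1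
      rw [sub_self]
      apply Real.sSup_le _ zero_le_one
      rintro r ⟨x, hx, rfl⟩
      simp [Matrix.zero_mulVec]
    · intro i j
      exact ht
    · intro i j
      exact one_pos
    · intro Z hZ
      have h : Dop A A θJ J Z = t • Z - Aᵀ * (A * Z) := by
        rw [Dop, hadT, hadJ]
      rw [h, finner_sub_left, finner_smul_left, finner_adj']
      exact hDpos Z hZ
  · -- the monotonicity statement with K₀ = 1
    intro k hk
    obtain ⟨j, rfl⟩ : ∃ j, k = j + 1 := ⟨k - 1, (Nat.succ_pred_eq_of_pos hk).symm⟩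
    dsimp only
    by_cases hmem : ((p (j + 1)).1, (p (j + 1)).2.1, -(p (j + 1)).2.2) ∈ OmegaStar f g A X
    · exact Or.inl hmem
    · right
      -- the step must move, since a fixed point is a KKT point
      have hδpos : 0 < Qv (((p (j + 1)).1, (p (j + 1)).2.1, -(p (j + 1)).2.2)
          - ((p (j + 1 + 1)).1, (p (j + 1 + 1)).2.1, -(p (j + 1 + 1)).2.2)) := by
        apply hQpos
        intro heq
        have e1 : (p (j + 1)).1 = (p (j + 1 + 1)).1 := by
          have h1 := congrArg Prod.fst heq
          simp only [Prod.fst_sub, Prod.fst_zero] at h1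
          exact sub_eq_zero.mp h1
        have e2 : (p (j + 1)).2.1 = (p (j + 1 + 1)).2.1 := by
          have h1 := congrArg (fun q => q.2.1) heq
          simp only [Prod.snd_sub, Prod.fst_sub, Prod.snd_zero, Prod.fst_zero] at h1
          exact sub_eq_zero.mp h1
        have e3 : (p (j + 1)).2.2 = (p (j + 1 + 1)).2.2 := by
          have h1 := congrArg (fun q => q.2.2) heq
          simp only [Prod.snd_sub, Prod.snd_zero] at h1
          have h2 := sub_eq_zero.mp h1
          exact neg_inj.mp h2
        apply hmem
        have h4 : A * (p (j + 1 + 1)).1 + (p (j + 1 + 1)).2.1 - X = 0 := by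
          have h5 := hlrec (j + 1)
          rw [← e3] at h5
          have h6 := (left_eq_add).mp h5
          exact h6
        refine ⟨?_, ?_, ?_⟩
        · have h5 := hsubZ (j + 1)
          rw [← e1, ← e2, ← e3] at h5
          simpa [sub_self, smul_zero, Matrix.mul_zero] using h5
        · show -(p (j + 1)).2.2 ∈ subdiff g (p (j + 1)).2.1
          rw [e3, e2]
          exact hsubE (j + 1)
        · show A * (p (j + 1)).1 + (p (j + 1)).2.1 = X
          rw [e1, e2]
          exact sub_eq_zero.mp h4
      -- now compare the two distances
      have hset : ∀ ω : Triple m d n,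
          {r | ∃ ωs ∈ OmegaStar f g A X, r = tinner (ω - ωs) (Hop A A θJ J (ω - ωs))}
          = {r | ∃ ωs ∈ OmegaStar f g A X, r = Qv (ω - ωs)} := by
        intro ω
        simp only [hQ]
      have hbdd : ∀ ω : Triple m d n,
          BddBelow {r | ∃ ωs ∈ OmegaStar f g A X, r = Qv (ω - ωs)} := by
        intro ω
        refine ⟨0, ?_⟩
        rintro r ⟨ωs, h1, rfl⟩
        exact hQnn _
      have hnonemp : ∀ ω : Triple m d n,
          Set.Nonempty {r | ∃ ωs ∈ OmegaStar f g A X, r = Qv (ω - ωs)} := by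
        intro ω
        exact ⟨Qv (ω - ωst), ωst, ⟨hfs, hgs, hcs⟩, rfl⟩
      rw [dist2H, dist2H, hset, hset]
      have h1 : sInf {r | ∃ ωs ∈ OmegaStar f g A X,
            r = Qv (((p (j + 1 + 1)).1, (p (j + 1 + 1)).2.1, -(p (j + 1 + 1)).2.2) - ωs)}
          + Qv (((p (j + 1)).1, (p (j + 1)).2.1, -(p (j + 1)).2.2)
            - ((p (j + 1 + 1)).1, (p (j + 1 + 1)).2.1, -(p (j + 1 + 1)).2.2))
          ≤ sInf {r | ∃ ωs ∈ OmegaStar f g A X,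
            r = Qv (((p (j + 1)).1, (p (j + 1)).2.1, -(p (j + 1)).2.2) - ωs)} := by
        apply le_csInf (hnonemp _)
        rintro r ⟨ωs, hωs, rfl⟩
        have hK := key j ωs hωs
        have h2 : sInf {r | ∃ ωs ∈ OmegaStar f g A X,
              r = Qv (((p (j + 1 + 1)).1, (p (j + 1 + 1)).2.1, -(p (j + 1 + 1)).2.2) - ωs)}
            ≤ Qv (((p (j + 1 + 1)).1, (p (j + 1 + 1)).2.1, -(p (j + 1 + 1)).2.2) - ωs) :=
          csInf_le (hbdd _) ⟨ωs, hωs, rfl⟩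
        linarith
      linarith


end
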